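/- For every undirected weighted graph G on n vertices, there exists a weighted graph H on the same vertex set (not necessarily a subgraph of G) with O(n^{4/3}·log n) edges such that for all u,v: d_G(u,v) ≤ d_H(u,v) ≤ d_G(u,v) + 4·W_{u,v}. Moreover, such an H is produced with high probability by taking a (2n^{1/3} ln n)-light initialization of G together with all pairs of a random vertex set S (each vertex sampled independently with probability n^{-1/3}) connected by edges weighted by their G-distances. -/

import Mathlib

/-!
Let `B x` be the `t ≈ n^{1/3} log n` lightest neighbours of each vertex `x`, and let `S` be a set of
`O(n^{2/3})` vertices meeting every full `B x` (found greedily: some vertex lies in a `t / n`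
fraction of the sets not yet hit). The emulator has the edges `x — B x` and all pairs of `S`,
weighted by `G`-distances, so it has `O(n t + |S|²) = O(n^{4/3} log n)` edges and its distances
dominate those of `G`. Along a shortest `u`-`v` path, keep the path edges that are present; at the
first missing edge `a — b` jump from `a` to some `z ∈ S ∩ B a` with `w a z ≤ w a b`, at the last
missing edge `c — d` likewise from `d` to some `z' ∈ S ∩ B d`, and join `z` to `z'` by an edge of
`S`. Each of the four extra hops costs at most the heaviest edge `W` of the path.
-/

open Finset SimpleGraph
open scoped Classical

namespace AddSpanner

/-- Total weight of a walk. -/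
noncomputable def walkWeight {V : Type} (w : V → V → ℝ) {G : SimpleGraph V} :
    ∀ {u v : V}, G.Walk u v → ℝ
  | _, _, .nil => 0
  | u, _, .cons (v := x) _ q => w u x + walkWeight w q

/-- Maximum edge weight along a walk (0 for the trivial walk). -/
noncomputable def walkMaxW {V : Type} (w : V → V → ℝ) {G : SimpleGraph V} {u v : V}
    (p : G.Walk u v) : ℝ :=
  (p.darts.map fun d => w d.toProd.1 d.toProd.2).foldr max 0

/-- Weighted shortest-path distance (infimum over all walk weights). -/
noncomputable def wdist {V : Type} (G : SimpleGraph V) (w : V → V → ℝ) (u v : V) : ℝ :=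
  sInf {x | ∃ p : G.Walk u v, walkWeight w p = x}

/-- A walk is a shortest path if it is a path whose weight realizes the distance. -/
def IsShortestPath {V : Type} (G : SimpleGraph V) (w : V → V → ℝ) {u v : V}
    (p : G.Walk u v) : Prop :=
  p.IsPath ∧ walkWeight w p = wdist G w u v

/-- Number of `H`-neighbors of `x` reachable by an edge no heavier than the edge `{x,y}`. -/
noncomputable def lightDeg {V : Type} [Fintype V] (H : SimpleGraph V) (w : V → V → ℝ)
    (x y : V) : ℕ :=
  (Finset.univ.filter fun z => H.Adj x z ∧ w x z ≤ w x y).card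

/-- `H` is a `t`-light initialization of `G`: it is a subgraph which, for every vertex,
contains its `t` lightest incident edges (all of them if the degree is at most `t`);
equivalently, whenever an edge `{x,y}` of `G` is missing from `H`, vertex `x` already has at
least `t` incident `H`-edges of weight at most `w x y`. -/
def LightInit {V : Type} [Fintype V] (G H : SimpleGraph V) (w : V → V → ℝ) (t : ℝ) : Prop :=
  H ≤ G ∧ ∀ x y, G.Adj x y → ¬ H.Adj x y → t ≤ (lightDeg H w x y : ℝ)

/-- Number of edges of a graph. -/
noncomputable def numEdges {V : Type} (H : SimpleGraph V) : ℕ :=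
  Nat.card H.edgeSet

section Walks

variable {V : Type} {G H : SimpleGraph V} {w w' : V → V → ℝ}

@[simp] lemma walkWeight_nil {u : V} : walkWeight w (Walk.nil : G.Walk u u) = 0 := rfl

@[simp] lemma walkWeight_cons {u x v : V} (h : G.Adj u x) (p : G.Walk x v) :
    walkWeight w (Walk.cons h p) = w u x + walkWeight w p := rfl

lemma walkWeight_append {u v x : V} (p : G.Walk u v) (q : G.Walk v x) :
    walkWeight w (p.append q) = walkWeight w p + walkWeight w q := by
  induction p with
  | nil => simp
  | cons h p ih => simp [ih, add_assoc]

lemma walkWeight_le_walkWeight (hw : ∀ x y, G.Adj x y → w x y ≤ w' x y) {u v : V}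
    (p : G.Walk u v) : walkWeight w p ≤ walkWeight w' p := by
  induction p with
  | nil => simp
  | cons h p ih => simpa using add_le_add (hw _ _ h) ih

lemma walkWeight_nonneg (hw : ∀ x y, G.Adj x y → 0 ≤ w x y) {u v : V} (p : G.Walk u v) :
    0 ≤ walkWeight w p := by
  induction p with
  | nil => simp
  | cons h p ih => simpa using add_nonneg (hw _ _ h) ih

lemma walkWeight_reverse (hsym : ∀ x y, w x y = w y x) {u v : V} (p : G.Walk u v) :
    walkWeight w p.reverse = walkWeight w p := by
  induction p with
  | nil => simp
  | cons h p ih => simp [walkWeight_append, ih, hsym, add_comm]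

lemma walkWeight_transfer {u v : V} (p : G.Walk u v) (hp : ∀ e ∈ p.edges, e ∈ H.edgeSet) :
    walkWeight w (p.transfer H hp) = walkWeight w p := by
  induction p with
  | nil => simp
  | cons h p ih => exact congrArg (w _ _ + ·) (ih _)

lemma walkWeight_bypass_le [DecidableEq V] (hw : ∀ x y, G.Adj x y → 0 ≤ w x y) {u v : V}
    (p : G.Walk u v) : walkWeight w p.bypass ≤ walkWeight w p := by
  induction p with
  | nil => simp [Walk.bypass]
  | cons h p ih =>
    rw [Walk.bypass]
    split_ifs with hs
    · have hsplit := walkWeight_append (w := w) (p.bypass.takeUntil _ hs) (p.bypass.dropUntil _ hs)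
      rw [p.bypass.take_spec hs] at hsplit
      have := walkWeight_nonneg hw (p.bypass.takeUntil _ hs)
      have := hw _ _ h
      simp only [walkWeight_cons]
      linarith
    · simpa using ih

lemma walkMaxW_cons {u x v : V} (h : G.Adj u x) (p : G.Walk x v) :
    walkMaxW w (Walk.cons h p) = max (w u x) (walkMaxW w p) := rfl

lemma walkMaxW_nonneg {u v : V} (p : G.Walk u v) : 0 ≤ walkMaxW w p := by
  induction p with
  | nil => exact le_rfl
  | cons h p ih =>
    rw [walkMaxW_cons]
    exact ih.trans (le_max_right _ _)

lemma le_walkMaxW {u v : V} (p : G.Walk u v) {d : G.Dart} (hd : d ∈ p.darts) :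
    w d.fst d.snd ≤ walkMaxW w p := by
  induction p with
  | nil => simp at hd
  | cons h p ih =>
    rw [Walk.darts_cons, List.mem_cons] at hd
    rw [walkMaxW_cons]
    rcases hd with rfl | hd
    · exact le_max_left _ _
    · exact (ih hd).trans (le_max_right _ _)

lemma wdist_le_walkWeight (hw : ∀ x y, G.Adj x y → 0 ≤ w x y) {u v : V} (p : G.Walk u v) :
    wdist G w u v ≤ walkWeight w p :=
  csInf_le ⟨0, fun _ ⟨q, hq⟩ => hq ▸ walkWeight_nonneg hw q⟩ ⟨p, rfl⟩

lemma le_wdist {u v : V} (h : G.Reachable u v) {c : ℝ}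
    (hc : ∀ p : G.Walk u v, c ≤ walkWeight w p) : c ≤ wdist G w u v :=
  le_csInf (h.elim fun p => ⟨_, p, rfl⟩) fun _ ⟨p, hp⟩ => hp ▸ hc p

lemma wdist_nonneg (hw : ∀ x y, G.Adj x y → 0 ≤ w x y) (u v : V) : 0 ≤ wdist G w u v :=
  Real.sInf_nonneg fun _ ⟨p, hp⟩ => hp ▸ walkWeight_nonneg hw p

lemma wdist_of_not_reachable {u v : V} (h : ¬ G.Reachable u v) : wdist G w u v = 0 := by
  have : {x | ∃ p : G.Walk u v, walkWeight w p = x} = ∅ :=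
    Set.eq_empty_of_forall_notMem fun _ ⟨p, _⟩ => h ⟨p⟩
  rw [wdist, this, Real.sInf_empty]

lemma wdist_le_of_adj (hw : ∀ x y, G.Adj x y → 0 ≤ w x y) {u v : V} (h : G.Adj u v) :
    wdist G w u v ≤ w u v := by
  simpa using wdist_le_walkWeight hw (Walk.cons h Walk.nil)

lemma walkWeight_wdist_transfer_le (hw : ∀ x y, G.Adj x y → 0 ≤ w x y)
    {u v : V} (p : G.Walk u v) (hp : ∀ e ∈ p.edges, e ∈ H.edgeSet) :
    walkWeight (wdist G w) (p.transfer H hp) ≤ walkWeight w p := by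
  rw [walkWeight_transfer]
  exact walkWeight_le_walkWeight (fun _ _ h => wdist_le_of_adj hw h) p

lemma wdist_comm (hsym : ∀ x y, w x y = w y x) (u v : V) : wdist G w u v = wdist G w v u := by
  have key : ∀ a b, {x | ∃ p : G.Walk a b, walkWeight w p = x} ⊆
      {x | ∃ p : G.Walk b a, walkWeight w p = x} :=
    fun _ _ _ ⟨p, hp⟩ => ⟨p.reverse, (walkWeight_reverse hsym p).trans hp⟩
  exact congrArg sInf ((key u v).antisymm (key v u))

lemma exists_isShortestPath [Fintype V] (hw : ∀ x y, G.Adj x y → 0 ≤ w x y) {u v : V}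
    (h : G.Reachable u v) : ∃ p : G.Walk u v, IsShortestPath G w p := by
  have : Nonempty (G.Path u v) := h.elim fun p => ⟨p.toPath⟩
  obtain ⟨p, -, hp⟩ := Finset.exists_min_image Finset.univ
    (fun p : G.Path u v => walkWeight w p.val) Finset.univ_nonempty
  refine ⟨p, p.isPath, le_antisymm (le_wdist h fun q => ?_) (wdist_le_walkWeight hw _)⟩
  exact (hp q.toPath (Finset.mem_univ _)).trans (walkWeight_bypass_le hw q)

lemma wdist_triangle [Fintype V] (hw : ∀ x y, G.Adj x y → 0 ≤ w x y) {u x v : V}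
    (hux : G.Reachable u x) : wdist G w u v ≤ wdist G w u x + wdist G w x v := by
  by_cases hxv : G.Reachable x v
  · obtain ⟨p, -, hp⟩ := exists_isShortestPath hw hux
    obtain ⟨q, -, hq⟩ := exists_isShortestPath hw hxv
    simpa [walkWeight_append, hp, hq] using wdist_le_walkWeight hw (p.append q)
  · rw [wdist_of_not_reachable fun huv => hxv (hux.symm.trans huv)]
    exact add_nonneg (wdist_nonneg hw u x) (wdist_nonneg hw x v)

lemma wdist_le_walkWeight_wdist [Fintype V] (hw : ∀ x y, G.Adj x y → 0 ≤ w x y)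
    (hH : ∀ a b, H.Adj a b → G.Reachable a b) {u v : V} (q : H.Walk u v) :
    wdist G w u v ≤ walkWeight (wdist G w) q := by
  induction q with
  | nil => exact wdist_le_walkWeight hw Walk.nil
  | cons h q ih =>
    rw [walkWeight_cons]
    exact (wdist_triangle hw (hH _ _ h)).trans (add_le_add_right ih _)

lemma wdist_le_wdist_wdist [Fintype V] (hw : ∀ x y, G.Adj x y → 0 ≤ w x y)
    (hH : ∀ a b, H.Adj a b → G.Reachable a b) {u v : V}
    (hreach : G.Reachable u v → H.Reachable u v) :
    wdist G w u v ≤ wdist H (wdist G w) u v := by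
  by_cases huv : G.Reachable u v
  · exact le_wdist (hreach huv) (wdist_le_walkWeight_wdist hw hH)
  · rw [wdist_of_not_reachable huv]
    exact wdist_nonneg (fun x y _ => wdist_nonneg hw x y) u v

end Walks

section LightestSubset

lemma exists_subset_card_eq_min_forall_le {α β : Type*} [LinearOrder β] (s : Finset α)
    (f : α → β) (t : ℕ) :
    ∃ B ⊆ s, #B = min t #s ∧ ∀ y ∈ s, y ∉ B → ∀ z ∈ B, f z ≤ f y := by
  induction t with
  | zero => exact ⟨∅, empty_subset _, by simp, by simp⟩
  | succ t ih =>
    obtain ⟨B, hBs, hcard, hle⟩ := ih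
    rcases (s \ B).eq_empty_or_nonempty with hsB | hsB
    · have hBeq : B = s := hBs.antisymm (sdiff_eq_empty_iff_subset.mp hsB)
      subst hBeq
      exact ⟨B, hBs, by omega, fun y hy hyB => absurd hy hyB⟩
    obtain ⟨m, hm, hmin⟩ := (s \ B).exists_min_image f hsB
    rw [mem_sdiff] at hm
    have hlt : #B < #s := card_lt_card ⟨hBs, fun h => hm.2 (h hm.1)⟩
    refine ⟨insert m B, insert_subset hm.1 hBs, by rw [card_insert_of_notMem hm.2]; omega, ?_⟩
    intro y hy hyB z hz
    rw [mem_insert, not_or] at hyB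
    rcases mem_insert.mp hz with rfl | hz
    · exact hmin y (mem_sdiff.mpr ⟨hy, hyB.2⟩)
    · exact hle y hy hyB.2 z hz

variable {V : Type} [Fintype V]

noncomputable def lightNbrs (G : SimpleGraph V) (w : V → V → ℝ) (t : ℕ) (x : V) : Finset V :=
  (exists_subset_card_eq_min_forall_le (G.neighborFinset x) (w x) t).choose

variable {G : SimpleGraph V} {w : V → V → ℝ} {t : ℕ} {x : V}

lemma lightNbrs_spec :
    lightNbrs G w t x ⊆ G.neighborFinset x ∧ #(lightNbrs G w t x) = min t (G.degree x) ∧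
      ∀ y ∈ G.neighborFinset x, y ∉ lightNbrs G w t x →
        ∀ z ∈ lightNbrs G w t x, w x z ≤ w x y :=
  (exists_subset_card_eq_min_forall_le (G.neighborFinset x) (w x) t).choose_spec

lemma adj_of_mem_lightNbrs {z : V} (hz : z ∈ lightNbrs G w t x) : G.Adj x z :=
  (mem_neighborFinset G x z).mp (lightNbrs_spec.1 hz)

lemma card_lightNbrs_le : #(lightNbrs G w t x) ≤ t :=
  lightNbrs_spec.2.1.trans_le (min_le_left _ _)

lemma card_lightNbrs_eq_of_notMem {y : V} (hxy : G.Adj x y) (hy : y ∉ lightNbrs G w t x) :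
    #(lightNbrs G w t x) = t := by
  obtain ⟨hsub, hcard, -⟩ := lightNbrs_spec (G := G) (w := w) (t := t) (x := x)
  have hlt : #(lightNbrs G w t x) < G.degree x :=
    card_lt_card ⟨hsub, fun h => hy (h ((mem_neighborFinset G x y).mpr hxy))⟩
  omega

lemma le_of_notMem_lightNbrs {y z : V} (hxy : G.Adj x y) (hy : y ∉ lightNbrs G w t x)
    (hz : z ∈ lightNbrs G w t x) : w x z ≤ w x y :=
  lightNbrs_spec.2.2 y ((mem_neighborFinset G x y).mpr hxy) hy z hz

end LightestSubset

section HittingSet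

variable {V : Type} [Fintype V]

lemma exists_le_card_filter_mem [Nonempty V] (F : Finset (Finset V)) {t : ℕ}
    (hF : ∀ A ∈ F, t ≤ #A) : ∃ x, t * #F ≤ Fintype.card V * #{A ∈ F | x ∈ A} := by
  obtain ⟨x, -, hx⟩ := univ.exists_max_image (fun x => #{A ∈ F | x ∈ A}) univ_nonempty
  refine ⟨x, ?_⟩
  calc t * #F = #F • t := by rw [smul_eq_mul, mul_comm]
    _ ≤ ∑ A ∈ F, #A := card_nsmul_le_sum F _ t hF
    _ ≤ Fintype.card V * #{A ∈ F | x ∈ A} := sum_card_le fun a => hx a (mem_univ a)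

lemma exists_hitting_set (F : Finset (Finset V)) {t : ℕ} (hF : ∀ A ∈ F, t ≤ #A) (k : ℕ)
    (hk : #F * (1 - t / Fintype.card V : ℝ) ^ k < 1) :
    ∃ S : Finset V, #S ≤ k ∧ ∀ A ∈ F, (A ∩ S).Nonempty := by
  induction k generalizing F with
  | zero =>
    have hF : (#F : ℝ) < 1 := by simpa using hk
    have : F = ∅ := card_eq_zero.mp <| Nat.lt_one_iff.mp (by exact_mod_cast hF)
    exact ⟨∅, le_rfl, by simp [this]⟩
  | succ k ih =>
    rcases F.eq_empty_or_nonempty with rfl | ⟨A₀, hA₀⟩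
    · exact ⟨∅, Nat.zero_le _, by simp⟩
    set n := Fintype.card V
    rcases isEmpty_or_nonempty V with hV | hV
    · have : (#F : ℝ) < 1 := by simpa [n, Fintype.card_eq_zero] using hk
      exact absurd (card_pos.mpr ⟨A₀, hA₀⟩) (by exact_mod_cast this.not_ge)
    obtain ⟨x, hx⟩ := exists_le_card_filter_mem F hF
    set F' := F.filter (x ∉ ·)
    have hn : (0 : ℝ) < n := by exact_mod_cast Fintype.card_pos
    have hq : (0 : ℝ) ≤ 1 - t / n := by
      rw [sub_nonneg, div_le_one hn]
      exact_mod_cast (hF A₀ hA₀).trans (card_le_univ A₀)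
    have hF' : (#F' : ℝ) ≤ #F * (1 - t / n) := by
      have hsplit : (#{A ∈ F | x ∈ A} : ℝ) + #F' = #F := by
        exact_mod_cast card_filter_add_card_filter_not (s := F) (x ∈ ·)
      have hx' : (#F : ℝ) * (t / n) ≤ #{A ∈ F | x ∈ A} := by
        rw [mul_div_assoc', div_le_iff₀ hn, mul_comm (#F : ℝ), mul_comm _ (n : ℝ)]
        exact_mod_cast hx
      linarith [mul_one_sub (#F : ℝ) (t / n)]
    obtain ⟨S, hS, hhit⟩ := ih F' (fun A hA => hF A (mem_filter.mp hA).1) <| by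
      calc (#F' : ℝ) * (1 - t / n) ^ k ≤ #F * (1 - t / n) * (1 - t / n) ^ k := by gcongr
        _ = #F * (1 - t / n) ^ (k + 1) := by ring
        _ < 1 := hk
    refine ⟨insert x S, (card_insert_le _ _).trans (by omega), fun A hA => ?_⟩
    by_cases hxA : x ∈ A
    · exact ⟨x, mem_inter.mpr ⟨hxA, mem_insert_self _ _⟩⟩
    · exact (hhit A (mem_filter.mpr ⟨hA, hxA⟩)).mono (inter_subset_inter_left (subset_insert _ _))

lemma exists_hitting_set_card_le (F : Finset (Finset V)) {t : ℕ} (ht : 0 < t)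
    (hF : ∀ A ∈ F, t ≤ #A) :
    ∃ S : Finset V, (#S : ℝ) ≤ Fintype.card V / t * Real.log #F + 1 ∧
      ∀ A ∈ F, (A ∩ S).Nonempty := by
  rcases F.eq_empty_or_nonempty with rfl | ⟨A₀, hA₀⟩
  · exact ⟨∅, by simp, by simp⟩
  set n := Fintype.card V
  set L := Real.log #F
  have hL : 0 ≤ L := Real.log_natCast_nonneg _
  have ht' : (0 : ℝ) < t := by exact_mod_cast ht
  have hn : (0 : ℝ) < n := by exact_mod_cast ht.trans_le ((hF A₀ hA₀).trans (card_le_univ A₀))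
  have hF0 : (0 : ℝ) < #F := by exact_mod_cast card_pos.mpr ⟨A₀, hA₀⟩
  set k := ⌊n / t * L⌋₊ + 1
  have hk : n / t * L < k := by push_cast [k]; exact Nat.lt_floor_add_one _
  obtain ⟨S, hS, hhit⟩ := exists_hitting_set F hF k <| by
    have hq : (0 : ℝ) ≤ 1 - t / n := by
      rw [sub_nonneg, div_le_one hn]
      exact_mod_cast (hF A₀ hA₀).trans (card_le_univ A₀)
    calc (#F : ℝ) * (1 - t / n) ^ k ≤ #F * Real.exp (-(t / n)) ^ k := by
          gcongr
          linarith [Real.add_one_le_exp (-(t / n : ℝ))]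
      _ = #F * Real.exp (-(k * (t / n))) := by rw [← Real.exp_nat_mul, mul_neg]
      _ < #F * Real.exp (-L) := by
          gcongr
          calc L = n / t * L * (t / n) := by field_simp
            _ < k * (t / n) := by gcongr
      _ = 1 := by rw [Real.exp_neg, Real.exp_log hF0, mul_inv_cancel₀ hF0.ne']
  refine ⟨S, ?_, hhit⟩
  calc (#S : ℝ) ≤ k := by exact_mod_cast hS
    _ ≤ n / t * L + 1 := by
      push_cast [k]
      gcongr
      exact Nat.floor_le (by positivity)

end HittingSet

lemma numEdges_fromRel_le {V : Type} [Fintype V] (r : V → V → Prop) :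
    numEdges (fromRel r) ≤ #{p : V × V | r p.1 p.2} := by
  have hsub : (fromRel r).edgeSet ⊆
      (({p : V × V | r p.1 p.2} : Finset (V × V)).image (Function.uncurry Sym2.mk) :
        Finset (Sym2 V)) := by
    rintro ⟨a, b⟩ ⟨-, hab | hba⟩
    · exact mem_coe.mpr (mem_image.mpr ⟨(a, b), by simpa using hab, rfl⟩)
    · exact mem_coe.mpr (mem_image.mpr ⟨(b, a), by simpa using hba, Sym2.eq_swap⟩)
  rw [numEdges, Nat.card_coe_set_eq]
  exact (Set.ncard_le_ncard hsub (finite_toSet _)).trans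
    ((Set.ncard_coe_finset _).trans_le card_image_le)

section Emulator

variable {V : Type} {G : SimpleGraph V} {w : V → V → ℝ} {B : V → Finset V} {S : Finset V}

structure LightHitting (G : SimpleGraph V) (w : V → V → ℝ) (B : V → Finset V) (S : Finset V) :
    Prop where
  adj_of_mem {x z : V} : z ∈ B x → G.Adj x z
  exists_mem {x y : V} : G.Adj x y → y ∉ B x → ∃ z ∈ B x, z ∈ S ∧ w x z ≤ w x y

/-- The edges of the emulator; its edge weights are the `G`-distances `wdist G w`. -/
def emulator (G : SimpleGraph V) (B : V → Finset V) (S : Finset V) : SimpleGraph V :=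
  fromRel fun a b => b ∈ B a ∨ (a ∈ S ∧ b ∈ S ∧ G.Reachable a b)

lemma emulator_adj {a b : V} :
    (emulator G B S).Adj a b ↔ a ≠ b ∧ ((b ∈ B a ∨ (a ∈ S ∧ b ∈ S ∧ G.Reachable a b)) ∨
      (a ∈ B b ∨ (b ∈ S ∧ a ∈ S ∧ G.Reachable b a))) :=
  fromRel_adj _ _ _

lemma emulator_adj_of_mem_of_mem {a b : V} (ha : a ∈ S) (hb : b ∈ S) (hab : G.Reachable a b)
    (hne : a ≠ b) : (emulator G B S).Adj a b :=
  emulator_adj.mpr ⟨hne, Or.inl (Or.inr ⟨ha, hb, hab⟩)⟩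

lemma LightHitting.emulator_adj_of_mem (hBS : LightHitting G w B S) {x z : V} (hz : z ∈ B x) :
    (emulator G B S).Adj x z :=
  emulator_adj.mpr ⟨(hBS.adj_of_mem hz).ne, Or.inl (Or.inl hz)⟩

lemma LightHitting.reachable_of_emulator_adj (hBS : LightHitting G w B S) {a b : V}
    (h : (emulator G B S).Adj a b) : G.Reachable a b := by
  rcases emulator_adj.mp h with ⟨-, (hab | ⟨-, -, hab⟩) | (hba | ⟨-, -, hba⟩)⟩
  exacts [(hBS.adj_of_mem hab).reachable, hab, (hBS.adj_of_mem hba).reachable.symm, hba.symm]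

lemma numEdges_emulator_le [Fintype V] : numEdges (emulator G B S) ≤ ∑ x, #(B x) + #S ^ 2 := by
  refine (numEdges_fromRel_le _).trans ?_
  calc _ ≤ #(({p : V × V | p.2 ∈ B p.1} : Finset (V × V)) ∪ S ×ˢ S) :=
        card_le_card fun p hp => by simp_all; tauto
    _ ≤ #{p : V × V | p.2 ∈ B p.1} + #(S ×ˢ S) := card_union_le _ _
    _ = ∑ x, #(B x) + #S ^ 2 := by
      rw [card_filter, Fintype.sum_prod_type, card_product, sq]
      simp

lemma exists_emulator_walk_of_mem (hw : ∀ x y, G.Adj x y → 0 ≤ w x y) {a b : V} (ha : a ∈ S)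
    (hb : b ∈ S) (r : G.Walk a b) :
    ∃ q : (emulator G B S).Walk a b, walkWeight (wdist G w) q ≤ walkWeight w r := by
  by_cases hab : a = b
  · subst hab
    exact ⟨Walk.nil, walkWeight_nonneg hw r⟩
  · refine ⟨Walk.cons (emulator_adj_of_mem_of_mem ha hb r.reachable hab) Walk.nil, ?_⟩
    rw [walkWeight_cons]
    simpa using wdist_le_walkWeight hw r

/-- Past the last edge `b — c` of `p` missing from the emulator, the walk can be rerouted
through a vertex `z ∈ S ∩ B c`; the detour costs at most two edges of `p`. -/
lemma LightHitting.exists_detour_after_last_missing (hBS : LightHitting G w B S)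
    (hw : ∀ x y, G.Adj x y → 0 ≤ w x y) (hsym : ∀ x y, w x y = w y x) {M : ℝ} {a v : V}
    (p : G.Walk a v) (hM : ∀ d ∈ p.darts, w d.fst d.snd ≤ M)
    (hmiss : ¬ ∀ e ∈ p.edges, e ∈ (emulator G B S).edgeSet) :
    ∃ z ∈ S, ∃ (r : G.Walk a z) (q : (emulator G B S).Walk z v),
      walkWeight w r + walkWeight (wdist G w) q ≤ walkWeight w p + 2 * M := by
  induction p with
  | nil => simp at hmiss
  | @cons u b v h p ih =>
    simp only [Walk.darts_cons, List.mem_cons, forall_eq_or_imp] at hM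
    by_cases hp : ∀ e ∈ p.edges, e ∈ (emulator G B S).edgeSet
    · have hub : ¬ (emulator G B S).Adj b u := fun hbu =>
        hmiss (by simpa [Walk.edges_cons] using ⟨hbu.symm, hp⟩)
      obtain ⟨z, hzB, hzS, hz⟩ :=
        hBS.exists_mem h.symm fun hu => hub (hBS.emulator_adj_of_mem hu)
      have hbz := hBS.adj_of_mem hzB
      refine ⟨z, hzS, Walk.cons h (Walk.cons hbz Walk.nil),
        Walk.cons (hBS.emulator_adj_of_mem hzB).symm (p.transfer _ hp), ?_⟩
      have := walkWeight_wdist_transfer_le hw p hp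
      have := wdist_le_of_adj hw hbz.symm
      simp only [walkWeight_cons, walkWeight_nil]
      linarith [hsym u b, hsym z b]
    · obtain ⟨z, hzS, r, q, hrq⟩ := ih hM.2 hp
      exact ⟨z, hzS, Walk.cons h r, q, by simp only [walkWeight_cons]; linarith [hM.1]⟩

/-- At the first edge `u — b` missing from the emulator, jump from `u` to some `z ∈ S ∩ B u`,
then through the clique on `S` to the detour vertex after the last missing edge. -/
lemma LightHitting.exists_emulator_walk_le (hBS : LightHitting G w B S)
    (hw : ∀ x y, G.Adj x y → 0 ≤ w x y) (hsym : ∀ x y, w x y = w y x) {M : ℝ} (hM0 : 0 ≤ M)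
    {u v : V} (p : G.Walk u v) (hM : ∀ d ∈ p.darts, w d.fst d.snd ≤ M) :
    ∃ q : (emulator G B S).Walk u v, walkWeight (wdist G w) q ≤ walkWeight w p + 4 * M := by
  induction p with
  | nil => exact ⟨Walk.nil, by simp [hM0]⟩
  | @cons u b v h p ih =>
    have hMp := hM
    simp only [Walk.darts_cons, List.mem_cons, forall_eq_or_imp] at hMp
    by_cases hub : (emulator G B S).Adj u b
    · obtain ⟨q, hq⟩ := ih hMp.2
      refine ⟨Walk.cons hub q, ?_⟩
      have := wdist_le_of_adj hw h
      simp only [walkWeight_cons]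
      linarith
    obtain ⟨z, hzB, hzS, hz⟩ := hBS.exists_mem h fun hb => hub (hBS.emulator_adj_of_mem hb)
    have huz := hBS.adj_of_mem hzB
    obtain ⟨z', hz'S, r, q, hrq⟩ := hBS.exists_detour_after_last_missing hw hsym
      (Walk.cons h p) hM fun hall => hub (hall s(u, b) (by simp))
    obtain ⟨q₀, hq₀⟩ := exists_emulator_walk_of_mem (B := B) hw hzS hz'S (Walk.cons huz.symm r)
    refine ⟨Walk.cons (hBS.emulator_adj_of_mem hzB) (q₀.append q), ?_⟩
    have := wdist_le_of_adj hw huz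
    simp only [walkWeight_cons, walkWeight_append] at hq₀ hrq ⊢
    linarith [hsym z u]

lemma LightHitting.wdist_emulator_le (hBS : LightHitting G w B S)
    (hw : ∀ x y, G.Adj x y → 0 ≤ w x y) (hsym : ∀ x y, w x y = w y x) {u v : V}
    (p : G.Walk u v) :
    wdist (emulator G B S) (wdist G w) u v ≤ walkWeight w p + 4 * walkMaxW w p := by
  obtain ⟨q, hq⟩ := hBS.exists_emulator_walk_le hw hsym (walkMaxW_nonneg p) p
    fun _ hd => le_walkMaxW p hd
  exact (wdist_le_walkWeight (fun x y _ => wdist_nonneg hw x y) q).trans hq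

lemma LightHitting.wdist_le_wdist_emulator [Fintype V] (hBS : LightHitting G w B S)
    (hw : ∀ x y, G.Adj x y → 0 ≤ w x y) (hsym : ∀ x y, w x y = w y x) (u v : V) :
    wdist G w u v ≤ wdist (emulator G B S) (wdist G w) u v := by
  refine wdist_le_wdist_wdist hw (fun _ _ => hBS.reachable_of_emulator_adj) fun huv => ?_
  obtain ⟨p⟩ := huv
  obtain ⟨q, -⟩ := hBS.exists_emulator_walk_le hw hsym (walkMaxW_nonneg p) p
    fun _ hd => le_walkMaxW p hd
  exact q.reachable

lemma exists_lightHitting [Fintype V] (G : SimpleGraph V) (w : V → V → ℝ) {t : ℕ}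
    (ht : 0 < t) :
    ∃ (B : V → Finset V) (S : Finset V), LightHitting G w B S ∧ (∀ x, #(B x) ≤ t) ∧
      (#S : ℝ) ≤ Fintype.card V / t * Real.log (Fintype.card V) + 1 := by
  set F := (univ.image (lightNbrs G w t)).filter (t ≤ #·)
  obtain ⟨S, hS, hhit⟩ := exists_hitting_set_card_le F ht fun A hA => (mem_filter.mp hA).2
  refine ⟨lightNbrs G w t, S, ⟨adj_of_mem_lightNbrs, fun {x y} hxy hy => ?_⟩,
    fun _ => card_lightNbrs_le, hS.trans ?_⟩
  · obtain ⟨z, hz⟩ := hhit (lightNbrs G w t x) <| mem_filter.mpr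
      ⟨mem_image_of_mem _ (mem_univ x), (card_lightNbrs_eq_of_notMem hxy hy).ge⟩
    rw [mem_inter] at hz
    exact ⟨z, hz.1, hz.2, le_of_notMem_lightNbrs hxy hy hz.1⟩
  · have hFn : #F ≤ Fintype.card V :=
      (card_filter_le _ _).trans (card_image_le.trans (card_univ (α := V)).le)
    have hlog : Real.log #F ≤ Real.log (Fintype.card V) := by
      rcases Nat.eq_zero_or_pos #F with hF | hF
      · simp [hF, Real.log_natCast_nonneg]
      · exact Real.log_le_log (Nat.cast_pos.mpr hF) (Nat.cast_le.mpr hFn)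
    gcongr

end Emulator

lemma mul_add_sq_le_rpow_mul_log {n t s : ℝ} (hn : 2 ≤ n) (ht : n ^ (1 / 3 : ℝ) * Real.log n ≤ t)
    (ht' : t ≤ n ^ (1 / 3 : ℝ) * Real.log n + 1) (hs0 : 0 ≤ s)
    (hs : s ≤ n / t * Real.log n + 1) :
    n * t + s ^ 2 ≤ 11 * n ^ (4 / 3 : ℝ) * Real.log n := by
  set N := n ^ (1 / 3 : ℝ)
  set L := Real.log n
  have hn0 : 0 ≤ n := by linarith
  have hN3 : n = N ^ 3 := by
    rw [← Real.rpow_natCast, ← Real.rpow_mul hn0]; norm_num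
  have hN4 : n ^ (4 / 3 : ℝ) = N ^ 4 := by
    rw [← Real.rpow_natCast, ← Real.rpow_mul hn0]; norm_num
  have hN : 1 ≤ N := Real.one_le_rpow (by linarith) (by norm_num)
  have hL : 1 / 2 ≤ L := by
    have := Real.log_two_gt_d9
    have := Real.log_le_log (by norm_num) hn
    linarith
  have htpos : 0 < t := lt_of_lt_of_le (by positivity) ht
  have hsN : s ≤ N ^ 2 + 1 := by
    have : n / t * L ≤ N ^ 2 := by
      rw [div_mul_eq_mul_div, div_le_iff₀ htpos, hN3]
      nlinarith [mul_le_mul_of_nonneg_left ht (by positivity : (0 : ℝ) ≤ N ^ 2)]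
    linarith
  rw [hN4, hN3]
  have hN2 : 1 ≤ N ^ 2 := one_le_pow₀ hN
  nlinarith [mul_le_mul_of_nonneg_left ht' (by positivity : (0 : ℝ) ≤ N ^ 3),
    mul_le_mul hsN hsN hs0 (by positivity), pow_le_pow_right₀ hN (by norm_num : 3 ≤ 4)]

end AddSpanner

open AddSpanner in
/-- every weighted graph on `n` vertices admits a `+4W` emulator (a weighted
graph on the same vertex set, not necessarily a subgraph, whose distances dominate those of
`G`) with `O(n^{4/3} log n)` edges. -/
theorem four_W_emulator_exists :
    ∃ C : ℝ, 0 < C ∧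
      ∀ (V : Type) [Fintype V] [DecidableEq V] (G : SimpleGraph V) (w : V → V → ℝ),
        2 ≤ Fintype.card V →
        (∀ x y, G.Adj x y → 0 < w x y) → (∀ x y, w x y = w y x) →
        ∃ (H : SimpleGraph V) (wH : V → V → ℝ),
          (∀ x y, wH x y = wH y x) ∧ (∀ x y, H.Adj x y → 0 ≤ wH x y) ∧
          (numEdges H : ℝ) ≤
            C * (Fintype.card V : ℝ) ^ ((4 : ℝ) / 3) * Real.log (Fintype.card V) ∧
          ∀ u v : V,
            wdist G w u v ≤ wdist H wH u v ∧
            (G.Reachable u v →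
              ∃ p : G.Walk u v, IsShortestPath G w p ∧
                wdist H wH u v ≤ wdist G w u v + 4 * walkMaxW w p) := by
  refine ⟨11, by norm_num, fun V _ _ G w hcard hpos hsym => ?_⟩
  have hw : ∀ x y, G.Adj x y → 0 ≤ w x y := fun x y h => (hpos x y h).le
  set n := Fintype.card V
  have hn : (2 : ℝ) ≤ n := by exact_mod_cast hcard
  -- the paper's `2 n^{1/3} ln n`, up to the constant
  set t := ⌈(n : ℝ) ^ (1 / 3 : ℝ) * Real.log n⌉₊
  have ht : 0 < t := Nat.ceil_pos.mpr (mul_pos (by positivity) (Real.log_pos (by linarith)))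
  obtain ⟨B, S, hBS, hB, hS⟩ := exists_lightHitting G w ht
  refine ⟨emulator G B S, wdist G w, wdist_comm hsym, fun x y _ => wdist_nonneg hw x y, ?_,
    fun u v => ⟨hBS.wdist_le_wdist_emulator hw hsym u v, fun huv => ?_⟩⟩
  · have hsum : ∑ x, #(B x) ≤ n * t :=
      (sum_le_sum fun x _ => hB x).trans_eq (by rw [sum_const, card_univ, smul_eq_mul])
    have hcount : (numEdges (emulator G B S) : ℝ) ≤ n * t + (#S : ℝ) ^ 2 := by
      exact_mod_cast numEdges_emulator_le.trans (Nat.add_le_add_right hsum _)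
    exact hcount.trans <| mul_add_sq_le_rpow_mul_log hn (Nat.le_ceil _)
      (Nat.ceil_lt_add_one (by positivity)).le (Nat.cast_nonneg _) hS
  · obtain ⟨p, hp⟩ := exists_isShortestPath hw huv
    exact ⟨p, hp, hp.2 ▸ hBS.wdist_emulator_le hw hsym p⟩
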